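/- Let γ, c, t, g, b be real numbers with 0 < γ < 1/2. If b = (g + c)·γ and the consensus constraint c + g ≥ 1 + 2·(t + b) holds, then b ≥ γ·(1 + 2t)/(1 − 2γ). In particular, the lower bound on b is independent of c. -/

import Mathlib

/-- Lower bound on the number of bad adventurers (Eq. 7): under the
zero-sum constraint `b = (g + c) * γ` and the consensus constraint
`c + g ≥ 1 + 2 * (t + b)`, we have `b ≥ γ * (1 + 2t)/(1 - 2γ)`,
a bound independent of `c`. -/
theorem nbg_bad_lower_bound (γ c t g b : ℝ) (hγ0 : 0 < γ) (hγ2 : γ < 1 / 2)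
    (hzero : b = (g + c) * γ) (hcons : c + g ≥ 1 + 2 * (t + b)) :
    b ≥ γ * (1 + 2 * t) / (1 - 2 * γ) := by
  have hden : 0 < 1 - 2 * γ := by linarith
  have hscaled : γ * (1 + 2 * (t + b)) ≤ b :=
    calc γ * (1 + 2 * (t + b)) ≤ γ * (c + g) := mul_le_mul_of_nonneg_left hcons hγ0.le
      _ = b := by rw [hzero]; ring
  rw [ge_iff_le, div_le_iff₀ hden]
  linarith
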